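/- Fix n ≥ 2. Let P_n(R) denote the set of monic polynomials p ∈ ℤ[X] of degree n that have a real root λ with 1 < λ ≤ R such that every other complex root μ of p satisfies |μ| < λ. Then there is a constant c > 0 (depending only on n) such that |P_n(R)| ≥ c · R^{n(n+1)/2} for all sufficiently large R. -/

import Mathlib

/-!
For positive integers `aᵢ ≤ R^(n-i)/n` the polynomial `p = Xⁿ - ∑ aᵢ Xⁱ` lies in `P_n(R)`.
Since `x ↦ ∑ aᵢ x^(i-n)` is strictly decreasing on `(0, ∞)`, `p` has a unique positive root `λ`,
which lies in `(1, R]` by the intermediate value theorem, and is simple because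
`λ p'(λ) = ∑ (n - i) aᵢ λⁱ > 0`. Any other root `μ` satisfies `|μ|ⁿ < ∑ aᵢ |μ|ⁱ`: the triangle
inequality is strict already for `a₀ + a₁ μ` unless `arg μ = 0`, and then `μ = λ`. Hence `|μ| < λ`.
There are at least `∏ R^(n-i)/(2n) = R^(n(n+1)/2) / (2n)ⁿ` such polynomials. Comparing `ncard`s
needs `P_n(R)` to be finite; this is Northcott's theorem, as the Mahler measure of a polynomial in
`P_n(R)` is at most `Rⁿ`.
-/

open Polynomial

/-- The set of Perron polynomials of degree `n` with Perron root no larger than `R`: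
monic integer polynomials of degree `n` with a real root `λ`, `1 < λ ≤ R`, such that every
other complex root (counted with multiplicity) has absolute value `< λ`. -/
noncomputable def perronPolys (n : ℕ) (R : ℝ) : Set (Polynomial ℤ) :=
  {p | p.Monic ∧ p.natDegree = n ∧ ∃ l : ℝ, 1 < l ∧ l ≤ R ∧
    Polynomial.aeval l p = 0 ∧
    ∀ μ ∈ (p.aroots ℂ).erase (l : ℂ), ‖μ‖ < l}

open Finset

section PositiveCoefficients

variable {n : ℕ} {b : Fin n → ℝ}

theorem sum_mul_pow_lt_pow_of_lt (hb : ∀ i, 0 ≤ b i) {x y : ℝ} (hx : 0 < x) (hxy : x < y)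
    (h : ∑ i, b i * x ^ (i : ℕ) ≤ x ^ n) : ∑ i, b i * y ^ (i : ℕ) < y ^ n := by
  have ht : 1 < y / x := (one_lt_div hx).2 hxy
  have hscaled : (∑ i, b i * y ^ (i : ℕ)) * (y / x) ≤ y ^ n :=
    calc (∑ i, b i * y ^ (i : ℕ)) * (y / x) = ∑ i, b i * x ^ (i : ℕ) * (y / x) ^ ((i : ℕ) + 1) := by
          rw [sum_mul]
          refine sum_congr rfl fun i _ => ?_
          rw [pow_succ, div_pow]
          field_simp
      _ ≤ ∑ i, b i * x ^ (i : ℕ) * (y / x) ^ n := by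
          gcongr with i
          · exact mul_nonneg (hb i) (by positivity)
          · exact ht.le
          · exact i.2
      _ = (y / x) ^ n * ∑ i, b i * x ^ (i : ℕ) := by rw [mul_sum]; simp only [mul_comm]
      _ ≤ (y / x) ^ n * x ^ n := by gcongr
      _ = y ^ n := by rw [div_pow, div_mul_cancel₀ _ (pow_ne_zero _ hx.ne')]
  have hsum : 0 ≤ ∑ i, b i * y ^ (i : ℕ) :=
    sum_nonneg fun i _ => mul_nonneg (hb i) (pow_nonneg (hx.trans hxy).le _)
  nlinarith [pow_pos (hx.trans hxy) n]

theorem eq_of_pow_eq_sum_mul_pow (hb : ∀ i, 0 ≤ b i) {x y : ℝ} (hx : 0 < x) (hy : 0 < y)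
    (hxb : x ^ n = ∑ i, b i * x ^ (i : ℕ)) (hyb : y ^ n = ∑ i, b i * y ^ (i : ℕ)) : x = y := by
  by_contra hne
  rcases lt_or_gt_of_ne hne with hlt | hlt
  · exact (sum_mul_pow_lt_pow_of_lt hb hx hlt hxb.ge).ne hyb.symm
  · exact (sum_mul_pow_lt_pow_of_lt hb hy hlt hyb.ge).ne hxb.symm

theorem lt_of_pow_lt_sum_mul_pow (hb : ∀ i, 0 ≤ b i) {l x : ℝ} (hl : 0 < l)
    (hlb : l ^ n = ∑ i, b i * l ^ (i : ℕ)) (hxb : x ^ n < ∑ i, b i * x ^ (i : ℕ)) : x < l := by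
  by_contra! hle
  rcases hle.eq_or_lt with rfl | hlt
  · exact hxb.ne hlb
  · exact (sum_mul_pow_lt_pow_of_lt hb hl hlt hlb.ge).not_gt hxb

theorem norm_add_mul_lt_of_arg_ne_zero {c d : ℝ} (hc : 0 < c) (hd : 0 < d) {z : ℂ}
    (hz : z.arg ≠ 0) : ‖(c : ℂ) + d * z‖ < c + d * ‖z‖ := by
  have hz0 : z ≠ 0 := by rintro rfl; exact hz Complex.arg_zero
  have hnorm : ‖(c : ℂ)‖ + ‖(d : ℂ) * z‖ = c + d * ‖z‖ := by
    rw [norm_mul, Complex.norm_real, Complex.norm_real, Real.norm_of_nonneg hc.le,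
      Real.norm_of_nonneg hd.le]
  refine hnorm ▸ (norm_add_le _ _).lt_of_ne ?_
  rw [Ne, Complex.norm_add_eq_iff, Complex.arg_ofReal_of_nonneg hc.le, Complex.arg_real_mul _ hd]
  simp [hc.ne', hd.ne', hz0, Ne.symm hz]

theorem norm_pow_lt_sum_mul_norm_pow (hn : 2 ≤ n) (hb : ∀ i, 0 < b i) {z : ℂ} (hz : z.arg ≠ 0)
    (hzb : z ^ n = ∑ i, (b i : ℂ) * z ^ (i : ℕ)) :
    ‖z‖ ^ n < ∑ i, b i * ‖z‖ ^ (i : ℕ) := by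
  obtain ⟨m, rfl⟩ : ∃ m, n = m + 2 := ⟨n - 2, by omega⟩
  rw [Fin.sum_univ_succ, Fin.sum_univ_succ] at hzb ⊢
  simp only [Fin.succ_zero_eq_one, Fin.val_zero, Fin.val_one, Fin.val_succ, pow_zero, mul_one,
    pow_one] at hzb ⊢
  calc ‖z‖ ^ (m + 2)
      = ‖(b 0 + b 1 * z : ℂ) + ∑ i : Fin m, (b i.succ.succ : ℂ) * z ^ ((i : ℕ) + 1 + 1)‖ := by
        rw [← norm_pow, hzb]; ring_nf
    _ ≤ ‖(b 0 + b 1 * z : ℂ)‖ + ∑ i : Fin m, ‖(b i.succ.succ : ℂ) * z ^ ((i : ℕ) + 1 + 1)‖ :=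
        (norm_add_le _ _).trans (by gcongr; exact norm_sum_le _ _)
    _ < b 0 + b 1 * ‖z‖ + ∑ i : Fin m, b i.succ.succ * ‖z‖ ^ ((i : ℕ) + 1 + 1) := by
        simp only [norm_mul, norm_pow, Complex.norm_real, Real.norm_of_nonneg (hb _).le]
        gcongr
        exact norm_add_mul_lt_of_arg_ne_zero (hb 0) (hb 1) hz
    _ = _ := by ring

theorem eq_or_norm_lt_of_pow_eq_sum_mul_pow (hn : 2 ≤ n) (hb : ∀ i, 0 < b i) {l : ℝ} (hl : 0 < l)
    (hlb : l ^ n = ∑ i, b i * l ^ (i : ℕ)) {z : ℂ} (hzb : z ^ n = ∑ i, (b i : ℂ) * z ^ (i : ℕ)) :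
    z = l ∨ ‖z‖ < l := by
  by_cases hz : z.arg = 0
  · left
    have hz_eq : z = ‖z‖ := by
      simpa [hz] using (Complex.norm_mul_exp_arg_mul_I z).symm
    have hz0 : z ≠ 0 := by
      rintro rfl
      obtain ⟨m, rfl⟩ : ∃ m, n = m + 1 := ⟨n - 1, by omega⟩
      simp [Fin.sum_univ_succ] at hzb
      exact (hb 0).ne' (by exact_mod_cast hzb.symm)
    have hnormb : ‖z‖ ^ n = ∑ i, b i * ‖z‖ ^ (i : ℕ) := by
      rw [hz_eq] at hzb
      exact_mod_cast hzb
    rw [hz_eq, eq_of_pow_eq_sum_mul_pow (fun i => (hb i).le) (norm_pos_iff.2 hz0) hl hnormb hlb]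
  · exact .inr (lt_of_pow_lt_sum_mul_pow (fun i => (hb i).le) hl hlb
      (norm_pow_lt_sum_mul_norm_pow hn hb hz hzb))

theorem sum_mul_mul_pow_lt_mul_pow (hn : 0 < n) (hb : ∀ i, 0 < b i) {l : ℝ} (hl : 0 < l)
    (hlb : l ^ n = ∑ i, b i * l ^ (i : ℕ)) :
    ∑ i : Fin n, ((i : ℕ) : ℝ) * b i * l ^ (i : ℕ) < n * l ^ n := by
  rw [hlb, mul_sum]
  refine sum_lt_sum_of_nonempty (univ_nonempty_iff.2 ⟨⟨0, hn⟩⟩) fun i _ => ?_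
  have hi : ((i : ℕ) : ℝ) < n := by exact_mod_cast i.2
  have := mul_pos (hb i) (pow_pos hl (i : ℕ))
  nlinarith

theorem exists_pow_eq_sum_mul_pow_mem_Ioc (hb1 : 1 < ∑ i, b i) {R : ℝ} (hR : 1 ≤ R)
    (hbR : ∑ i, b i * R ^ (i : ℕ) ≤ R ^ n) : ∃ l ∈ Set.Ioc 1 R, l ^ n = ∑ i, b i * l ^ (i : ℕ) := by
  have hcont : ContinuousOn (fun x : ℝ => x ^ n - ∑ i, b i * x ^ (i : ℕ)) (Set.Icc 1 R) := by
    fun_prop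
  have hsign :
      (0 : ℝ) ∈ Set.Ioc (1 ^ n - ∑ i, b i * 1 ^ (i : ℕ)) (R ^ n - ∑ i, b i * R ^ (i : ℕ)) := by
    simp only [one_pow, mul_one, Set.mem_Ioc]
    constructor <;> linarith
  obtain ⟨l, hl, hl0⟩ := intermediate_value_Ioc hR hcont hsign
  exact ⟨l, hl, sub_eq_zero.1 hl0⟩

end PositiveCoefficients

section XPowSubOfFn

variable {n : ℕ} (a : Fin n → ℤ)

theorem aeval_X_pow_sub_ofFn {S : Type*} [CommRing S] (x : S) :
    aeval x (X ^ n - ofFn n a) = x ^ n - ∑ i, (a i : S) * x ^ (i : ℕ) := by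
  simp [ofFn_eq_sum_monomial, aeval_monomial, mul_comm]

theorem mul_aeval_derivative_X_pow_sub_ofFn {S : Type*} [CommRing S] (x : S) :
    x * aeval x (derivative (X ^ n - ofFn n a)) =
      n * x ^ n - ∑ i : Fin n, ((i : ℕ) : S) * (a i : S) * x ^ (i : ℕ) := by
  have hX : ∀ k : ℕ, x * ((k : S) * x ^ (k - 1)) = k * x ^ k := by
    rintro (_ | k) <;> simp [pow_succ]; ring
  simp only [ofFn_eq_sum_monomial, derivative_X_pow, derivative_monomial, map_sub, map_sum, map_mul,
    aeval_monomial, aeval_X_pow, mul_sub, mul_sum, algebraMap_int_eq, eq_intCast, map_natCast, hX]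
  congr 1
  refine sum_congr rfl fun i _ => ?_
  linear_combination (a i : S) * hX i

theorem monic_X_pow_sub_ofFn : (X ^ n - ofFn n a).Monic :=
  monic_X_pow_sub (ofFn_degree_lt a)

theorem natDegree_X_pow_sub_ofFn : (X ^ n - ofFn n a).natDegree = n := by
  refine natDegree_eq_of_degree_eq_some ?_
  rw [degree_sub_eq_left_of_degree_lt] <;> simp [ofFn_degree_lt]

theorem X_pow_sub_ofFn_injective : Function.Injective fun a : Fin n → ℤ => X ^ n - ofFn n a :=
  (sub_right_injective).comp (injective_ofFn n)

end XPowSubOfFn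

theorem notMem_erase_aroots_of_aeval_derivative_ne_zero {R K : Type*} [CommRing R] [Field K]
    [Algebra R K] [DecidableEq K] {p : R[X]} (hp : p.map (algebraMap R K) ≠ 0) {x : K}
    (hx : aeval x (derivative p) ≠ 0) : x ∉ (p.aroots K).erase x := by
  intro hmem
  have h1 : 1 < rootMultiplicity x (p.map (algebraMap R K)) := by
    have := Multiset.count_pos.2 hmem
    rw [Multiset.count_erase_self, aroots_def, count_roots] at this
    omega
  rw [one_lt_rootMultiplicity_iff_isRoot hp, derivative_map] at h1
  simp only [IsRoot.def, eval_map_algebraMap] at h1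
  exact hx h1.2

theorem X_pow_sub_ofFn_mem_perronPolys {n : ℕ} (hn : 2 ≤ n) {a : Fin n → ℤ} (ha : ∀ i, 1 ≤ a i)
    {R : ℝ} (hR : 1 ≤ R) (haR : ∀ i : Fin n, (a i : ℝ) ≤ R ^ (n - i) / n) :
    X ^ n - ofFn n a ∈ perronPolys n R := by
  have hb : ∀ i, (0 : ℝ) < a i := fun i => by exact_mod_cast ha i
  have hsum_one : 1 < ∑ i, (a i : ℝ) :=
    calc (1 : ℝ) < n := by exact_mod_cast hn
      _ = ∑ _i : Fin n, (1 : ℝ) := by simp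
      _ ≤ ∑ i, (a i : ℝ) := sum_le_sum fun i _ => by exact_mod_cast ha i
  have hsum_R : ∑ i, (a i : ℝ) * R ^ (i : ℕ) ≤ R ^ n :=
    calc ∑ i, (a i : ℝ) * R ^ (i : ℕ) ≤ ∑ _i : Fin n, R ^ n / n := sum_le_sum fun i _ => by
          grw [haR i, div_mul_eq_mul_div, ← pow_add, Nat.sub_add_cancel i.2.le]
      _ = R ^ n := by
          rw [sum_const, card_univ, Fintype.card_fin, nsmul_eq_mul]
          field_simp
  obtain ⟨l, ⟨hl1, hlR⟩, hl⟩ := exists_pow_eq_sum_mul_pow_mem_Ioc hsum_one hR hsum_R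
  have hl0 : 0 < l := one_pos.trans hl1
  have hsimple : aeval l (derivative (X ^ n - ofFn n a)) ≠ 0 := by
    intro h
    have := mul_aeval_derivative_X_pow_sub_ofFn a l
    rw [h, mul_zero] at this
    linarith [sum_mul_mul_pow_lt_mul_pow (by omega) hb hl0 hl]
  refine ⟨monic_X_pow_sub_ofFn a, natDegree_X_pow_sub_ofFn a, l, hl1, hlR, ?_, fun μ hμ => ?_⟩
  · rw [aeval_X_pow_sub_ofFn, hl, sub_self]
  have hμb : μ ^ n = ∑ i, ((a i : ℝ) : ℂ) * μ ^ (i : ℕ) := by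
    have := (mem_aroots'.1 (Multiset.mem_of_mem_erase hμ)).2
    rw [aeval_X_pow_sub_ofFn, sub_eq_zero] at this
    exact_mod_cast this
  refine (eq_or_norm_lt_of_pow_eq_sum_mul_pow hn hb hl0 hl hμb).resolve_left ?_
  rintro rfl
  refine notMem_erase_aroots_of_aeval_derivative_ne_zero
    ((monic_X_pow_sub_ofFn a).map _).ne_zero ?_ hμ
  rwa [← Complex.coe_algebraMap, aeval_algebraMap_apply, Ne,
    map_eq_zero_iff _ (algebraMap ℝ ℂ).injective]

theorem perronPolys_finite (n : ℕ) (R : ℝ) : (perronPolys n R).Finite := by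
  refine (finite_mahlerMeasure_le n (max 1 R ^ n).toNNReal).subset ?_
  rintro p ⟨hmonic, hdeg, l, hl1, hlR, -, hroots⟩
  refine ⟨hdeg.le, ?_⟩
  have hnorm : ∀ μ ∈ p.aroots ℂ, max 1 ‖μ‖ ≤ max 1 R := fun μ hμ => by
    gcongr
    by_cases h : μ = l
    · rw [h, Complex.norm_real, Real.norm_of_nonneg (by linarith)]
      exact hlR
    · exact (hroots μ (Multiset.mem_erase_of_ne h |>.2 hμ)).le.trans hlR
  rw [mahlerMeasure_eq_leadingCoeff_mul_prod_roots, (hmonic.map _).leadingCoeff, norm_one, one_mul,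
    Real.coe_toNNReal _ (by positivity), ← algebraMap_int_eq]
  calc ((p.aroots ℂ).map fun μ => max 1 ‖μ‖).prod ≤ max 1 R ^ (p.aroots ℂ).card := by
        refine (Multiset.prod_map_le_prod_map₀ _ (fun _ => max 1 R) (fun _ _ => by positivity)
          hnorm).trans_eq ?_
        rw [Multiset.map_const', Multiset.prod_replicate]
    _ ≤ max 1 R ^ n := by
        refine pow_le_pow_right₀ (le_max_left _ _) ?_
        rw [aroots_def, ← hdeg]
        exact (card_roots' _).trans natDegree_map_le

theorem sum_range_sub_eq (n : ℕ) : ∑ i ∈ range n, (n - i) = n * (n + 1) / 2 := by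
  have h : ∑ i ∈ range n, (n - i) = ∑ i ∈ range (n + 1), i := by
    rw [sum_range_succ', add_zero, ← sum_range_reflect]
    exact sum_congr rfl fun i hi => by have := mem_range.1 hi; omega
  rw [h, sum_range_id, Nat.add_sub_cancel, mul_comm]

theorem prod_pow_sub_eq {M : Type*} [CommMonoid M] (x : M) (n : ℕ) :
    ∏ i : Fin n, x ^ (n - i) = x ^ (n * (n + 1) / 2) := by
  rw [Fin.prod_univ_eq_prod_range (fun i => x ^ (n - i)), prod_pow_eq_pow_sum, sum_range_sub_eq]

theorem prod_div_two_le_card_piFinset_Icc_floor {n : ℕ} {f : Fin n → ℝ} (hf : ∀ i, 1 ≤ f i) :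
    ∏ i, f i / 2 ≤ #(Fintype.piFinset fun i => Icc (1 : ℤ) ⌊f i⌋) := by
  rw [Fintype.card_piFinset, Nat.cast_prod]
  refine prod_le_prod (fun i _ => by linarith [hf i]) fun i _ => ?_
  have h1 : (1 : ℤ) ≤ ⌊f i⌋ := Int.le_floor.2 (by exact_mod_cast hf i)
  have h2 : ((⌊f i⌋.toNat : ℕ) : ℝ) = ⌊f i⌋ := by exact_mod_cast Int.toNat_of_nonneg (by omega)
  have h1' : (1 : ℝ) ≤ ⌊f i⌋ := by exact_mod_cast h1
  rw [Int.card_Icc, add_sub_cancel_right, h2]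
  linarith [Int.lt_floor_add_one (f i)]

/-- `|P_n(R)| ≥ c · R^(n(n+1)/2)` for all sufficiently large `R`. -/
theorem perronPolys_card_ge (n : ℕ) (hn : 2 ≤ n) :
    ∃ c : ℝ, 0 < c ∧ ∀ᶠ R : ℝ in Filter.atTop,
      c * R ^ (n * (n + 1) / 2) ≤ ((perronPolys n R).ncard : ℝ) := by
  refine ⟨1 / (2 * n) ^ n, by positivity, Filter.eventually_atTop.2 ⟨n, fun R hnR => ?_⟩⟩
  have hR : 1 ≤ R := le_trans (by exact_mod_cast (by omega : 1 ≤ n)) hnR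
  have hbox : ∀ i : Fin n, 1 ≤ R ^ (n - i) / n := fun i => by
    rw [one_le_div (by positivity)]
    exact hnR.trans (le_self_pow₀ hR (by omega))
  set box := Fintype.piFinset fun i : Fin n => Icc (1 : ℤ) ⌊R ^ (n - i) / n⌋
  have hsub : (box.image fun a => X ^ n - ofFn n a : Set ℤ[X]) ⊆ perronPolys n R := by
    simp only [coe_image, Set.image_subset_iff]
    intro a ha
    simp only [box, mem_coe, Fintype.mem_piFinset, mem_Icc] at ha
    exact X_pow_sub_ofFn_mem_perronPolys hn (fun i => (ha i).1) hR fun i => Int.le_floor.1 (ha i).2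
  calc 1 / (2 * n) ^ n * R ^ (n * (n + 1) / 2) = ∏ i : Fin n, R ^ (n - i) / n / 2 := by
        rw [prod_div_distrib, prod_div_distrib, prod_const, prod_const, card_univ, Fintype.card_fin,
          prod_pow_sub_eq]
        ring
    _ ≤ #box := prod_div_two_le_card_piFinset_Icc_floor hbox
    _ = #(box.image fun a => X ^ n - ofFn n a) := by
        rw [card_image_of_injective _ X_pow_sub_ofFn_injective]
    _ ≤ (perronPolys n R).ncard := by
        rw [← Set.ncard_coe_finset]
        exact_mod_cast Set.ncard_le_ncard hsub (perronPolys_finite n R)
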